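/- For m ≥ 2 and generic a₁,…,a_m ∈ ℂ* (in particular, pairwise distinct with all the 2m points (aᵢ:1:0), (1:-conj(aᵢ):0) distinct), the line L = {(s:t:0)} is the unique line of ℙ²(ℂ) containing at least 4 points of S = {(aᵢ:1:0), (1:-conj(aᵢ):0)} ∪ {(±1:0:1), (0:±1:1)}, and hence L is stabilized by every element of Aut_ℂ(ℙ², S). -/

import Mathlib

/-!
Every point of `S` outside `F` lies on `L`. A line `L' ≠ L` meets `L` in at most one point, since
two distinct points of `ℙ²` lie on a unique line, and it meets `F` in at most two points: the only
line through both `(±1:0:1)` is `y = 0`, which misses `(0:±1:1)`, and symmetrically. Hence `L'`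
contains at most three points of `S`, while `L` contains the `2m ≥ 4` points at infinity. A
projective transformation preserving `S` maps `L` to a line with as many points of `S`, so it
fixes `L`.
-/

open Projectivization
open scoped LinearAlgebra.Projectivization

noncomputable section

abbrev P2 := ℙ ℂ (Fin 3 → ℂ)

/-- Coordinatewise complex conjugation on ℙ²(ℂ). -/
def conjP (p : P2) : P2 :=
  Projectivization.mk ℂ (fun i => starRingEnd ℂ (p.rep i)) (by
    intro h
    apply p.rep_nonzero
    funext i
    have := congrFun h i
    simpa using this)

/-- The four points F = {(1:0:1), (-1:0:1), (0:1:1), (0:-1:1)}. -/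
def F : Set P2 :=
  {Projectivization.mk ℂ ![1, 0, 1] (fun h => by have := congrFun h 0; simp at this),
   Projectivization.mk ℂ ![-1, 0, 1] (fun h => by have := congrFun h 2; simp at this),
   Projectivization.mk ℂ ![0, 1, 1] (fun h => by have := congrFun h 1; simp at this),
   Projectivization.mk ℂ ![0, -1, 1] (fun h => by have := congrFun h 2; simp at this)}

/-- The set S = {(aᵢ:1:0), (1:-conj(aᵢ):0) : i} ∪ F. -/
def Spts (m : ℕ) (a : Fin m → ℂ) : Set P2 :=
  (⋃ i : Fin m,
    {Projectivization.mk ℂ ![a i, 1, 0] (fun h => by have := congrFun h 1; simp at this),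
     Projectivization.mk ℂ ![1, -(starRingEnd ℂ (a i)), 0]
       (fun h => by have := congrFun h 0; simp at this)}) ∪ F

/-- A line in ℙ²(ℂ): the zero set of a nonzero linear form. -/
def IsLine (L : Set P2) : Prop :=
  ∃ f : (Fin 3 → ℂ) →ₗ[ℂ] ℂ, f ≠ 0 ∧ L = {p | f p.rep = 0}

/-- The transformation of ℙ² induced by a linear automorphism of ℂ³. -/
def proj (g : (Fin 3 → ℂ) ≃ₗ[ℂ] (Fin 3 → ℂ)) : P2 → P2 :=
  Projectivization.map g.toLinearMap g.injective

/-- The line at infinity L = {(s:t:0)}. -/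
def Linf : Set P2 := {p | p.rep 2 = 0}

namespace Projectivization

variable {K V W : Type*} [Field K] [AddCommGroup V] [Module K V] [AddCommGroup W] [Module K W]

def zeroLocus (f : V →ₗ[K] K) : Set (ℙ K V) := {p | f p.rep = 0}

theorem mem_zeroLocus_iff_mem_projectivization_ker {f : V →ₗ[K] K} {p : ℙ K V} :
    p ∈ zeroLocus f ↔ p ∈ (LinearMap.ker f).projectivization := by
  rw [← p.mk_rep, Submodule.mk_mem_projectivization_iff, LinearMap.mem_ker, mk_rep]
  rfl

theorem mk_mem_zeroLocus_iff {f : V →ₗ[K] K} {v : V} (hv : v ≠ 0) :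
    mk K v hv ∈ zeroLocus f ↔ f v = 0 := by
  rw [mem_zeroLocus_iff_mem_projectivization_ker, Submodule.mk_mem_projectivization_iff,
    LinearMap.mem_ker]

theorem zeroLocus_eq_of_mem_of_mem [FiniteDimensional K V] (hV : Module.finrank K V = 3)
    {f g : V →ₗ[K] K} (hf : f ≠ 0) (hg : g ≠ 0) {p q : ℙ K V} (hpq : p ≠ q)
    (hpf : p ∈ zeroLocus f) (hqf : q ∈ zeroLocus f) (hpg : p ∈ zeroLocus g)
    (hqg : q ∈ zeroLocus g) : zeroLocus f = zeroLocus g := by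
  have finrank_ker {h : V →ₗ[K] K} (hh : h ≠ 0) : Module.finrank K (LinearMap.ker h) = 2 := by
    have := Module.Dual.finrank_ker_add_one_of_ne_zero hh
    omega
  simp only [mem_zeroLocus_iff_mem_projectivization_ker] at hpf hqf hpg hqg
  have hker := line_unique hpq _ _ (finrank_ker hf) (finrank_ker hg) hpf hqf hpg hqg
  ext x
  simp only [mem_zeroLocus_iff_mem_projectivization_ker, hker]

theorem zeroLocus_inter_subsingleton [FiniteDimensional K V] (hV : Module.finrank K V = 3)
    {f g : V →ₗ[K] K} (hf : f ≠ 0) (hg : g ≠ 0) (hfg : zeroLocus f ≠ zeroLocus g) :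
    (zeroLocus f ∩ zeroLocus g).Subsingleton := fun p hp q hq => by
  by_contra hpq
  exact hfg (zeroLocus_eq_of_mem_of_mem hV hf hg hpq hp.1 hq.1 hp.2 hq.2)

theorem image_map_zeroLocus (e : V ≃ₗ[K] W) (f : V →ₗ[K] K) :
    map (e : V →ₗ[K] W) e.injective '' zeroLocus f =
      zeroLocus (f ∘ₗ (e.symm : W →ₗ[K] V)) := by
  have hleft : Function.LeftInverse (map (e.symm : W →ₗ[K] V) e.symm.injective)
      (map (e : V →ₗ[K] W) e.injective) := fun p => by
    induction p using ind with | h v hv => simp [map_mk]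
  have hright : Function.RightInverse (map (e.symm : W →ₗ[K] V) e.symm.injective)
      (map (e : V →ₗ[K] W) e.injective) := fun p => by
    induction p using ind with | h v hv => simp [map_mk]
  rw [Set.image_eq_preimage_of_inverse hleft hright]
  ext p
  induction p using ind with | h v hv =>
  rw [Set.mem_preimage, map_mk, mk_mem_zeroLocus_iff, mk_mem_zeroLocus_iff]
  rfl

end Projectivization

theorem Set.ncard_insert_inter_le_two {α : Type*} {a b c d : α} {Z : Set α}
    (hab : a ∈ Z → b ∈ Z → c ∉ Z ∧ d ∉ Z)
    (hcd : c ∈ Z → d ∈ Z → a ∉ Z ∧ b ∉ Z) :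
    ({a, b, c, d} ∩ Z).ncard ≤ 2 := by
  have ncard_pair_le (x y : α) : ({x, y} : Set α).ncard ≤ 2 :=
    (Set.ncard_insert_le x {y}).trans (by rw [Set.ncard_singleton])
  by_cases ha : a ∈ Z <;> by_cases hb : b ∈ Z <;> by_cases hc : c ∈ Z <;>
    by_cases hd : d ∈ Z <;> simp_all [Set.insert_inter_of_mem, Set.insert_inter_of_notMem]

theorem LinearMap.proj_ne_zero {ι K : Type*} [Semiring K] [Nontrivial K] [DecidableEq ι]
    (i : ι) :
    (LinearMap.proj i : (ι → K) →ₗ[K] K) ≠ 0 := fun h => by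
  simpa using LinearMap.congr_fun h (Pi.single i 1)

def onXAxis (s : ℂ) : P2 := mk ℂ ![s, 0, 1] (fun h => by simpa using congrFun h 2)

def onYAxis (s : ℂ) : P2 := mk ℂ ![0, s, 1] (fun h => by simpa using congrFun h 2)

def atInfinity₁ (a : ℂ) : P2 := mk ℂ ![a, 1, 0] (fun h => by simpa using congrFun h 1)

def atInfinity₂ (a : ℂ) : P2 :=
  mk ℂ ![1, -(starRingEnd ℂ a), 0] (fun h => by simpa using congrFun h 0)

theorem F_eq : F = {onXAxis 1, onXAxis (-1), onYAxis 1, onYAxis (-1)} := rfl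

theorem Linf_eq_zeroLocus : Linf = zeroLocus (LinearMap.proj 2) := rfl

theorem isLine_iff {L : Set P2} : IsLine L ↔ ∃ f, f ≠ 0 ∧ L = zeroLocus f := Iff.rfl

theorem isLine_Linf : IsLine Linf := ⟨_, LinearMap.proj_ne_zero 2, Linf_eq_zeroLocus⟩

theorem onXAxis_injective : Function.Injective onXAxis := fun s t h => by
  obtain ⟨c, hc⟩ := (mk_eq_mk_iff' ℂ _ _ _ _).1 h
  simp [funext_iff, Fin.forall_fin_succ] at hc
  grind

theorem onYAxis_injective : Function.Injective onYAxis := fun s t h => by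
  obtain ⟨c, hc⟩ := (mk_eq_mk_iff' ℂ _ _ _ _).1 h
  simp [funext_iff, Fin.forall_fin_succ] at hc
  grind

theorem onYAxis_notMem_zeroLocus {f : (Fin 3 → ℂ) →ₗ[ℂ] ℂ} (hf : f ≠ 0)
    (h₁ : onXAxis 1 ∈ zeroLocus f) (h₂ : onXAxis (-1) ∈ zeroLocus f) {t : ℂ} (ht : t ≠ 0) :
    onYAxis t ∉ zeroLocus f := by
  rw [zeroLocus_eq_of_mem_of_mem (Module.finrank_fin_fun ℂ) hf (LinearMap.proj_ne_zero 1)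
    (onXAxis_injective.ne (by norm_num)) h₁ h₂ ((mk_mem_zeroLocus_iff _).2 (by simp))
    ((mk_mem_zeroLocus_iff _).2 (by simp)), onYAxis, mk_mem_zeroLocus_iff]
  simpa using ht

theorem onXAxis_notMem_zeroLocus {f : (Fin 3 → ℂ) →ₗ[ℂ] ℂ} (hf : f ≠ 0)
    (h₁ : onYAxis 1 ∈ zeroLocus f) (h₂ : onYAxis (-1) ∈ zeroLocus f) {t : ℂ} (ht : t ≠ 0) :
    onXAxis t ∉ zeroLocus f := by
  rw [zeroLocus_eq_of_mem_of_mem (Module.finrank_fin_fun ℂ) hf (LinearMap.proj_ne_zero 0)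
    (onYAxis_injective.ne (by norm_num)) h₁ h₂ ((mk_mem_zeroLocus_iff _).2 (by simp))
    ((mk_mem_zeroLocus_iff _).2 (by simp)), onXAxis, mk_mem_zeroLocus_iff]
  simpa using ht

theorem ncard_F_inter_zeroLocus_le_two {f : (Fin 3 → ℂ) →ₗ[ℂ] ℂ} (hf : f ≠ 0) :
    (F ∩ zeroLocus f).ncard ≤ 2 :=
  Set.ncard_insert_inter_le_two
    (fun h₁ h₂ => ⟨onYAxis_notMem_zeroLocus hf h₁ h₂ one_ne_zero,
      onYAxis_notMem_zeroLocus hf h₁ h₂ (neg_ne_zero.2 one_ne_zero)⟩)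
    (fun h₁ h₂ => ⟨onXAxis_notMem_zeroLocus hf h₁ h₂ one_ne_zero,
      onXAxis_notMem_zeroLocus hf h₁ h₂ (neg_ne_zero.2 one_ne_zero)⟩)

theorem atInfinity₁_mem_Linf (a : ℂ) : atInfinity₁ a ∈ Linf := by
  rw [Linf_eq_zeroLocus, atInfinity₁, mk_mem_zeroLocus_iff]
  rfl

theorem atInfinity₂_mem_Linf (a : ℂ) : atInfinity₂ a ∈ Linf := by
  rw [Linf_eq_zeroLocus, atInfinity₂, mk_mem_zeroLocus_iff]
  rfl

theorem Spts_eq (m : ℕ) (a : Fin m → ℂ) :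
    Spts m a = (⋃ i, {atInfinity₁ (a i), atInfinity₂ (a i)}) ∪ F := rfl

theorem F_finite : F.Finite := by
  rw [F_eq]
  exact Set.toFinite _

theorem Spts_finite (m : ℕ) (a : Fin m → ℂ) : (Spts m a).Finite :=
  (Set.finite_iUnion fun _ => Set.toFinite _).union F_finite

theorem Spts_subset_Linf_union_F (m : ℕ) (a : Fin m → ℂ) : Spts m a ⊆ Linf ∪ F := by
  rw [Spts_eq]
  refine Set.union_subset_union_left F (Set.iUnion_subset fun i => ?_)
  exact Set.insert_subset (atInfinity₁_mem_Linf _)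
    (Set.singleton_subset_iff.2 (atInfinity₂_mem_Linf _))

theorem range_subset_Spts_inter_Linf (m : ℕ) (a : Fin m → ℂ) :
    Set.range (Sum.elim (atInfinity₁ ∘ a) (atInfinity₂ ∘ a)) ⊆ Spts m a ∩ Linf := by
  rintro _ ⟨i | i, rfl⟩
  · exact ⟨Or.inl (Set.mem_iUnion.2 ⟨i, Or.inl rfl⟩), atInfinity₁_mem_Linf _⟩
  · exact ⟨Or.inl (Set.mem_iUnion.2 ⟨i, Or.inr rfl⟩), atInfinity₂_mem_Linf _⟩

theorem two_mul_le_ncard_Spts_inter_Linf {m : ℕ} {a : Fin m → ℂ}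
    (hinj : Function.Injective (Sum.elim (atInfinity₁ ∘ a) (atInfinity₂ ∘ a))) :
    2 * m ≤ (Spts m a ∩ Linf).ncard :=
  calc 2 * m = Nat.card (Fin m ⊕ Fin m) := by simp [two_mul]
    _ = (Set.range (Sum.elim (atInfinity₁ ∘ a) (atInfinity₂ ∘ a))).ncard :=
      (Set.ncard_range_of_injective hinj).symm
    _ ≤ (Spts m a ∩ Linf).ncard :=
      Set.ncard_le_ncard (range_subset_Spts_inter_Linf m a)
        ((Spts_finite m a).inter_of_left _)

theorem ncard_Spts_inter_zeroLocus_le_three (m : ℕ) (a : Fin m → ℂ)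
    {f : (Fin 3 → ℂ) →ₗ[ℂ] ℂ} (hf : f ≠ 0) (hne : zeroLocus f ≠ Linf) :
    (Spts m a ∩ zeroLocus f).ncard ≤ 3 := by
  have hsub : Spts m a ∩ zeroLocus f ⊆ (zeroLocus f ∩ Linf) ∪ (F ∩ zeroLocus f) :=
    fun p ⟨hpS, hpf⟩ => (Spts_subset_Linf_union_F m a hpS).imp (⟨hpf, ·⟩) (⟨·, hpf⟩)
  have hsing := zeroLocus_inter_subsingleton (Module.finrank_fin_fun ℂ) hf
    (LinearMap.proj_ne_zero 2) hne
  calc (Spts m a ∩ zeroLocus f).ncard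
      ≤ ((zeroLocus f ∩ Linf) ∪ (F ∩ zeroLocus f)).ncard :=
        Set.ncard_le_ncard hsub (hsing.finite.union (F_finite.inter_of_left _))
    _ ≤ (zeroLocus f ∩ Linf).ncard + (F ∩ zeroLocus f).ncard := Set.ncard_union_le _ _
    _ ≤ 1 + 2 := add_le_add ((Set.ncard_le_one hsing.finite).2 fun _ hp _ hq => hsing hp hq)
        (ncard_F_inter_zeroLocus_le_two hf)

theorem proj_injective (g : (Fin 3 → ℂ) ≃ₗ[ℂ] (Fin 3 → ℂ)) : Function.Injective (proj g) :=
  map_injective _ g.injective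

theorem IsLine.image_proj {L : Set P2} (hL : IsLine L) (g : (Fin 3 → ℂ) ≃ₗ[ℂ] (Fin 3 → ℂ)) :
    IsLine (proj g '' L) := by
  obtain ⟨f, hf, rfl⟩ := isLine_iff.1 hL
  refine ⟨f ∘ₗ (g.symm : (Fin 3 → ℂ) →ₗ[ℂ] (Fin 3 → ℂ)), fun h => hf ?_,
    image_map_zeroLocus g f⟩
  refine LinearMap.ext fun v => ?_
  simpa using LinearMap.congr_fun h (g v)

theorem image_proj_eq_of_forall_isLine {S L : Set P2} {n : ℕ} (hL : IsLine L)
    (hn : n ≤ (S ∩ L).ncard) (huniq : ∀ L', IsLine L' → n ≤ (S ∩ L').ncard → L' = L)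
    (g : (Fin 3 → ℂ) ≃ₗ[ℂ] (Fin 3 → ℂ)) (hg : proj g '' S = S) : proj g '' L = L := by
  refine huniq _ (hL.image_proj g) ?_
  rwa [← hg, ← Set.image_inter (proj_injective g),
    Set.ncard_image_of_injective _ (proj_injective g)]

/-- for m ≥ 2 and generic a₁,…,a_m ∈ ℂ* (concretely: all aᵢ nonzero and the
2m points (aᵢ:1:0), (1:-conj(aᵢ):0) pairwise distinct), the line L = {(s:t:0)} is the
unique line containing at least 4 points of S = {(aᵢ:1:0), (1:-conj(aᵢ):0)} ∪ F, and L is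
stabilized by every element of Aut_ℂ(ℙ², S). -/
theorem line_at_infinity_unique_and_stabilized (m : ℕ) (hm : 2 ≤ m) (a : Fin m → ℂ)
    (hinj : Function.Injective (Sum.elim
      (fun i : Fin m => Projectivization.mk ℂ ![a i, 1, 0]
        (fun h => by have := congrFun h 1; simp at this))
      (fun i : Fin m => Projectivization.mk ℂ ![1, -(starRingEnd ℂ (a i)), 0]
        (fun h => by have := congrFun h 0; simp at this)) : Fin m ⊕ Fin m → P2)) :
    IsLine Linf ∧ 4 ≤ (Spts m a ∩ Linf).ncard ∧
    (∀ L' : Set P2, IsLine L' → 4 ≤ (Spts m a ∩ L').ncard → L' = Linf) ∧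
    (∀ g : (Fin 3 → ℂ) ≃ₗ[ℂ] (Fin 3 → ℂ), proj g '' Spts m a = Spts m a →
      proj g '' Linf = Linf) := by
  have h4 : 4 ≤ (Spts m a ∩ Linf).ncard := by
    have := two_mul_le_ncard_Spts_inter_Linf hinj
    omega
  have huniq : ∀ L' : Set P2, IsLine L' → 4 ≤ (Spts m a ∩ L').ncard → L' = Linf := by
    rintro _ hL h4'
    obtain ⟨f, hf, rfl⟩ := isLine_iff.1 hL
    by_contra hne
    have := ncard_Spts_inter_zeroLocus_le_three m a hf hne
    omega
  exact ⟨isLine_Linf, h4, huniq, image_proj_eq_of_forall_isLine isLine_Linf h4 huniq⟩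

end
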